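/- arXiv:2102.06539 — 2 statements merged into one kernel-verified Lean document; each statement's English description precedes it below -/
import Mathlib

section
/- For any square matrix A ∈ ℝ^{d×d}, the absolute value of its determinant is bounded by the product of the Euclidean norms of its columns: |det A| ≤ ∏_{i=1}^d ‖A eᵢ‖, where eᵢ are the standard basis vectors. -/
/-! Applying Gram–Schmidt to the columns gives an orthonormal basis in which the matrix is
triangular with diagonal entries `⟪bᵢ, vᵢ⟫ ≤ ‖vᵢ‖`; the determinant is the same, up to sign,
in every orthonormal basis. -/

open Module

theorem OrthonormalBasis.abs_det_le_prod_norm {ι E : Type*} [Fintype ι] [DecidableEq ι]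
    [NormedAddCommGroup E] [InnerProductSpace ℝ E] (b : OrthonormalBasis ι ℝ E) (v : ι → E) :
    |b.toBasis.det v| ≤ ∏ i, ‖v i‖ := by
  -- `Orientation.volumeForm` only takes families indexed by `Fin n`
  set e := Fintype.equivFin ι
  set b' := b.reindex e
  have : Fact (finrank ℝ E = Fintype.card ι) := ⟨by simpa using finrank_eq_card_basis b'.toBasis⟩
  have hdet : b'.toBasis.det (v ∘ e.symm) = b.toBasis.det v := by
    simp [b', Basis.det_reindex, Function.comp_assoc]
  rw [← hdet, ← b'.toBasis.orientation.volumeForm_robust' b', ← e.symm.prod_comp]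
  exact b'.toBasis.orientation.abs_volumeForm_apply_le (v ∘ e.symm)

theorem Matrix.abs_det_le_prod_norm_col {n : Type*} [Fintype n] [DecidableEq n]
    (A : Matrix n n ℝ) : |A.det| ≤ ∏ i, ‖WithLp.toLp 2 (A.col i)‖ := by
  have hdet : (EuclideanSpace.basisFun n ℝ).toBasis.det (fun i ↦ WithLp.toLp 2 (A.col i))
      = A.det := by
    rw [Basis.det_apply]
    rfl
  simpa only [hdet] using
    (EuclideanSpace.basisFun n ℝ).abs_det_le_prod_norm fun i ↦ WithLp.toLp 2 (A.col i)

/-- Hadamard's inequality: the absolute determinant of a real square matrix is bounded by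
the product of the Euclidean norms of its columns. -/
theorem abs_det_le_prod_column_norms
    (d : ℕ) (A : Matrix (Fin d) (Fin d) ℝ) :
    |A.det| ≤ ∏ i : Fin d, Real.sqrt (∑ j : Fin d, (A j i) ^ 2) := by
  simpa [EuclideanSpace.norm_eq, sq_abs] using A.abs_det_le_prod_norm_col
end

section
/- The rational-quadratic spline segment f(ξ) = y⁰ + Δy[δξ² + αξ(1-ξ)] / [δ + ρξ(1-ξ)] on ξ ∈ [0,1], where Δy > 0, δ > 0, α > 0, α' > 0 and ρ = α' + α - 2δ, has derivative df/dξ = Δy · (α'ξ² + 2δξ(1-ξ) + α(1-ξ)²) δ / [δ + ρξ(1-ξ)]² which is strictly positive for all ξ ∈ [0,1]; hence f is strictly monotonically increasing on [0,1]. -/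
open Set

/-! Writing `ρ = α' + α - 2δ`, the denominator is `δ (ξ² + (1 - ξ)²) + (α + α') ξ (1 - ξ)`, positive on
`[0, 1]`, so the segment is differentiable there. The quotient rule gives the numerator
`δ (α' ξ² + 2δ ξ (1 - ξ) + α (1 - ξ)²)`, a sum of nonnegative terms in which `α' ξ²` and `α (1 - ξ)²`
cannot both vanish. A positive derivative on the convex set `[0, 1]` makes the segment strictly
increasing. -/

lemma rq_denom_pos {δ α α' ξ : ℝ} (hδ : 0 < δ) (hαα' : 0 ≤ α + α') (hξ : ξ ∈ Icc (0 : ℝ) 1) :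
    0 < δ + (α' + α - 2 * δ) * ξ * (1 - ξ) := by
  obtain ⟨h0, h1⟩ := hξ
  have hsplit : δ + (α' + α - 2 * δ) * ξ * (1 - ξ)
      = δ * (ξ ^ 2 + (1 - ξ) ^ 2) + (α + α') * (ξ * (1 - ξ)) := by ring
  have hsq : 0 < ξ ^ 2 + (1 - ξ) ^ 2 := by nlinarith [sq_nonneg (2 * ξ - 1)]
  rw [hsplit]
  have := mul_nonneg hαα' (mul_nonneg h0 (sub_nonneg.2 h1))
  positivity

lemma rq_numer_pos {δ α α' ξ : ℝ} (hδ : 0 ≤ δ) (hα : 0 < α) (hα' : 0 < α')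
    (hξ : ξ ∈ Icc (0 : ℝ) 1) :
    0 < α' * ξ ^ 2 + 2 * δ * ξ * (1 - ξ) + α * (1 - ξ) ^ 2 := by
  obtain ⟨h0, h1⟩ := hξ
  have hmid : 0 ≤ 2 * δ * ξ * (1 - ξ) := by
    have := sub_nonneg.2 h1
    positivity
  rcases h0.eq_or_lt with rfl | hξ0
  · nlinarith
  · nlinarith [mul_pos hα' (pow_pos hξ0 2), mul_nonneg hα.le (sq_nonneg (1 - ξ))]

lemma hasDerivAt_rq_segment (y0 Δy δ α α' ξ : ℝ)
    (hD : δ + (α' + α - 2 * δ) * ξ * (1 - ξ) ≠ 0) :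
    HasDerivAt
      (fun x => y0 + Δy * (δ * x ^ 2 + α * x * (1 - x)) / (δ + (α' + α - 2 * δ) * x * (1 - x)))
      (Δy * (α' * ξ ^ 2 + 2 * δ * ξ * (1 - ξ) + α * (1 - ξ) ^ 2) * δ
        / (δ + (α' + α - 2 * δ) * ξ * (1 - ξ)) ^ 2) ξ := by
  have hlin : HasDerivAt (fun x : ℝ => 1 - x) (-1) ξ := by
    simpa using (hasDerivAt_id' ξ).const_sub 1
  have hN : HasDerivAt (fun x => Δy * (δ * x ^ 2 + α * x * (1 - x)))
      (Δy * (δ * (2 * ξ) + (α * (1 - ξ) + α * ξ * (-1)))) ξ := by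
    have hsq : HasDerivAt (fun x : ℝ => x ^ 2) (2 * ξ) ξ := by simpa using hasDerivAt_pow 2 ξ
    have hprod := ((hasDerivAt_id' ξ).const_mul α).mul hlin
    simp only [mul_one] at hprod
    exact ((hsq.const_mul δ).add hprod).const_mul Δy
  have hD' : HasDerivAt (fun x => δ + (α' + α - 2 * δ) * x * (1 - x))
      ((α' + α - 2 * δ) * (1 - ξ) + (α' + α - 2 * δ) * ξ * (-1)) ξ := by
    have hprod := ((hasDerivAt_id' ξ).const_mul (α' + α - 2 * δ)).mul hlin
    simp only [mul_one] at hprod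
    simpa using hprod.const_add δ
  refine ((hN.div hD' hD).const_add y0).congr_deriv ?_
  field_simp
  ring

theorem rq_spline_strict_mono
    (y0 Δy δ α α' : ℝ)
    (hΔy : 0 < Δy) (hδ : 0 < δ) (hα : 0 < α) (hα' : 0 < α')
    (ρ : ℝ) (hρ : ρ = α' + α - 2 * δ)
    (f : ℝ → ℝ)
    (hf : ∀ ξ : ℝ, f ξ = y0 + Δy * (δ * ξ ^ 2 + α * ξ * (1 - ξ)) / (δ + ρ * ξ * (1 - ξ))) :
    (∀ ξ ∈ Set.Icc (0:ℝ) 1,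
        HasDerivAt f
          (Δy * (α' * ξ ^ 2 + 2 * δ * ξ * (1 - ξ) + α * (1 - ξ) ^ 2) * δ
            / (δ + ρ * ξ * (1 - ξ)) ^ 2) ξ ∧
        0 < Δy * (α' * ξ ^ 2 + 2 * δ * ξ * (1 - ξ) + α * (1 - ξ) ^ 2) * δ
            / (δ + ρ * ξ * (1 - ξ)) ^ 2) ∧
      StrictMonoOn f (Set.Icc (0:ℝ) 1) := by
  subst hρ
  obtain rfl : f = _ := funext hf
  have hD : ∀ ξ ∈ Icc (0 : ℝ) 1, 0 < δ + (α' + α - 2 * δ) * ξ * (1 - ξ) :=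
    fun ξ hξ => rq_denom_pos hδ (by positivity) hξ
  have hderiv : ∀ ξ ∈ Icc (0 : ℝ) 1, HasDerivAt _ _ ξ :=
    fun ξ hξ => hasDerivAt_rq_segment y0 Δy δ α α' ξ (hD ξ hξ).ne'
  have hpos : ∀ ξ ∈ Icc (0 : ℝ) 1, 0 < Δy * (α' * ξ ^ 2 + 2 * δ * ξ * (1 - ξ) + α * (1 - ξ) ^ 2)
      * δ / (δ + (α' + α - 2 * δ) * ξ * (1 - ξ)) ^ 2 := by
    intro ξ hξ
    have := rq_numer_pos hδ.le hα hα' hξ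
    have := hD ξ hξ
    positivity
  refine ⟨fun ξ hξ => ⟨hderiv ξ hξ, hpos ξ hξ⟩, ?_⟩
  refine strictMonoOn_of_hasDerivWithinAt_pos (convex_Icc 0 1)
    (fun ξ hξ => (hderiv ξ hξ).continuousAt.continuousWithinAt)
    (fun ξ hξ => (hderiv ξ (interior_subset hξ)).hasDerivWithinAt)
    (fun ξ hξ => hpos ξ (interior_subset hξ))
end
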